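/- arXiv:2312.15308 — 7 statements merged into one kernel-verified Lean document; each statement's English description precedes it below -/
import Mathlib

section
/- Let q be a prime power, m ≥ 1, and 1 ≤ d < q−2. There exists a vector v ∈ F_q^n of full Hamming weight n = (q^{m+1}−1)/(q−1) such that v is orthogonal (Euclidean inner product) to the evaluation of every homogeneous polynomial of degree d at the standard representatives of the points of P^m. That is, the dual code of the projective Reed–Muller code PRM_d(q,m) contains a vector of Hamming weight n. -/
/-!
The standard representatives of `P^m` split into the affine chart `(1, x)`, `x ∈ F^m`, and the
representatives `(0, R)` of the hyperplane `P^(m-1)` at infinity. It suffices to annihilate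
the monomials of degree `d`. Over the whole chart `F^m` such a monomial sums to zero, because each
exponent is `< q - 1`; so a nowhere-zero weight that works on `P^(m-1)` extends by `1` on the
chart to one that works on `P^m`.

On the line `P^1 = {(1, t)} ∪ {(0, 1)}`, the weight `π(t)` on `(1, t)` and `1` on `(0, 1)` works
when `π` is monic of degree `q - 1 - d ≥ 2` without roots in `F` (the minimal polynomial of a
primitive element of the extension of that degree): since `∑ₜ tʲ` vanishes for `j < q - 1` and is
`-1` for `j = q - 1`, the sum `∑ₜ π(t) tᵏ` for `k ≤ d` is `-1` if `k = d` and `0` otherwise, which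
cancels the value `0 ^ α₀` of `X^α` at `(0, 1)`.
-/

open Finset Polynomial

/-- `Q` is the standard representative of a point of `P^m`: its leftmost
nonzero coordinate equals `1`. -/
def IsStdRep {F : Type*} [Field F] {m : ℕ} (Q : Fin (m + 1) → F) : Prop :=
  ∃ i : Fin (m + 1), Q i = 1 ∧ ∀ j : Fin (m + 1), j < i → Q j = 0

theorem Polynomial.exists_monic_natDegree_eq_forall_eval_ne_zero (F : Type*) [Field F] [Finite F]
    {e : ℕ} (he : 2 ≤ e) : ∃ π : F[X], π.Monic ∧ π.natDegree = e ∧ ∀ t, π.eval t ≠ 0 := by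
  obtain ⟨p, _⟩ := CharP.exists F
  have : Fact p.Prime := ⟨CharP.char_is_prime F p⟩
  have : NeZero e := ⟨by omega⟩
  obtain ⟨α, hα⟩ := Field.exists_primitive_element_of_finite_bot F (FiniteField.Extension F p e)
  have hint : IsIntegral F α := .of_finite F α
  have hdeg : (minpoly F α).natDegree = e := by
    rw [(Field.primitive_element_iff_minpoly_natDegree_eq F α).1 hα,
      FiniteField.finrank_extension]
  exact ⟨minpoly F α, minpoly.monic hint, hdeg,
    fun t => (minpoly.irreducible hint).not_isRoot_of_natDegree_ne_one (by omega)⟩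

namespace FiniteField

variable {F : Type*} [Field F] [Fintype F]

theorem sum_pow_card_sub_one : ∑ t : F, t ^ (Fintype.card F - 1) = -1 := by
  classical
  calc ∑ t : F, t ^ (Fintype.card F - 1) = ∑ t : F, (1 - if t = 0 then 1 else 0) := by
        refine sum_congr rfl fun t _ => ?_
        by_cases ht : t = 0
        · have : Fintype.card F - 1 ≠ 0 := by have := Fintype.one_lt_card (α := F); omega
          simp [ht, this]
        · simp [ht, pow_card_sub_one_eq_one t ht]
    _ = -1 := by simp [sum_sub_distrib]

theorem sum_eval_eq_neg_coeff {g : F[X]} (hg : g.natDegree ≤ Fintype.card F - 1) :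
    ∑ t : F, g.eval t = -g.coeff (Fintype.card F - 1) := by
  calc ∑ t : F, g.eval t
      = ∑ j ∈ range (Fintype.card F - 1 + 1), g.coeff j * ∑ t : F, t ^ j := by
        simp_rw [eval_eq_sum_range' (Nat.lt_succ_of_le hg), mul_sum]
        exact sum_comm
    _ = -g.coeff (Fintype.card F - 1) := by
        rw [sum_range_succ, sum_pow_card_sub_one, mul_neg_one, add_eq_right]
        exact sum_eq_zero fun j hj => by
          rw [sum_pow_lt_card_sub_one F j (mem_range.1 hj), mul_zero]

theorem sum_eval_mul_pow_of_monic {π : F[X]} (hπ : π.Monic) {d k : ℕ}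
    (hdeg : π.natDegree = Fintype.card F - 1 - d) (hd : d ≤ Fintype.card F - 1) (hk : k ≤ d) :
    ∑ t : F, π.eval t * t ^ k = if k = d then -1 else 0 := by
  have hdeg' : (π * X ^ k).natDegree ≤ Fintype.card F - 1 := by
    grw [natDegree_mul_le, natDegree_X_pow_le]; omega
  simp_rw [← eval_mul_X_pow, sum_eval_eq_neg_coeff hdeg',
    coeff_mul_X_pow', if_pos (show k ≤ Fintype.card F - 1 by omega)]
  split_ifs with hkd
  · rw [hkd, ← hdeg, hπ.coeff_natDegree]
  · rw [coeff_eq_zero_of_natDegree_lt (by omega), neg_zero]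

theorem sum_prod_pow_eq_zero {ι : Type*} [Fintype ι] [DecidableEq ι] [Nonempty ι]
    {α : ι → ℕ} (hα : ∀ i, α i < Fintype.card F - 1) : ∑ x : ι → F, ∏ i, x i ^ α i = 0 := by
  rw [← Fintype.piFinset_univ, sum_prod_piFinset univ fun i (t : F) => t ^ α i]
  obtain ⟨i⟩ := ‹Nonempty ι›
  exact prod_eq_zero (mem_univ i) (sum_pow_lt_card_sub_one F _ (hα i))

end FiniteField

theorem Fin.prod_cons_pow {M : Type*} [CommMonoid M] {m : ℕ} (a : M) (x : Fin (m + 1) → M)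
    (α : Fin (m + 2) → ℕ) :
    ∏ i, (Fin.cons a x : Fin (m + 2) → M) i ^ α i = a ^ α 0 * ∏ i, x i ^ α i.succ := by
  simp [Fin.prod_univ_succ]

theorem MvPolynomial.sum_mul_eval_eq_zero_of_isHomogeneous {R σ : Type*} [CommSemiring R]
    [Fintype σ] {s : Finset (σ → R)} {w : (σ → R) → R} {d : ℕ}
    (hw : ∀ α : σ → ℕ, ∑ i, α i = d → ∑ Q ∈ s, w Q * ∏ i, Q i ^ α i = 0)
    {f : MvPolynomial σ R} (hf : f.IsHomogeneous d) :
    ∑ Q ∈ s, w Q * eval Q f = 0 := by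
  simp_rw [eval_eq', mul_sum]
  rw [sum_comm]
  refine sum_eq_zero fun α hα => ?_
  have hdeg : ∑ i, α i = d := by
    rw [← hf (mem_support_iff.1 hα), Pi.one_def, ← Finsupp.degree_eq_weight_one,
      Finsupp.degree_eq_sum]
  simp_rw [mul_left_comm (w _), ← mul_sum, hw α hdeg, mul_zero]

section

variable {F : Type*} [Field F]

instance [DecidableEq F] {m : ℕ} : DecidablePred (IsStdRep : (Fin (m + 1) → F) → Prop) :=
  fun Q => inferInstanceAs (Decidable (∃ i, Q i = 1 ∧ ∀ j, j < i → Q j = 0))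

theorem isStdRep_cons_iff {m : ℕ} {a : F} {R : Fin (m + 1) → F} :
    IsStdRep (Fin.cons a R : Fin (m + 2) → F) ↔ a = 1 ∨ a = 0 ∧ IsStdRep R := by
  constructor
  · rintro ⟨i, hi, hlt⟩
    induction i using Fin.cases with
    | zero => exact Or.inl hi
    | succ i =>
      refine Or.inr ⟨hlt 0 (Fin.succ_pos i), i, hi, fun j hj => ?_⟩
      simpa using hlt j.succ (Fin.succ_lt_succ_iff.2 hj)
  · rintro (rfl | ⟨rfl, i, hi, hlt⟩)
    · exact ⟨0, rfl, fun j hj => absurd hj (Fin.not_lt_zero j)⟩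
    · refine ⟨i.succ, hi, fun j hj => ?_⟩
      induction j using Fin.cases with
      | zero => rfl
      | succ j => exact hlt j (Fin.succ_lt_succ_iff.1 hj)

theorem isStdRep_fin_one_iff {R : Fin 1 → F} : IsStdRep R ↔ R = 1 := by
  refine ⟨fun ⟨i, hi, _⟩ => funext fun j => ?_, ?_⟩
  · rwa [Fin.fin_one_eq_zero j, ← Fin.fin_one_eq_zero i]
  rintro rfl
  exact ⟨0, rfl, fun j hj => absurd hj (Fin.not_lt_zero j)⟩

variable [Fintype F] [DecidableEq F]

theorem sum_isStdRep_succ {M : Type*} [AddCommMonoid M] {m : ℕ} (g : (Fin (m + 2) → F) → M) :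
    ∑ Q with IsStdRep Q, g Q =
      ∑ x, g (Fin.cons 1 x) + ∑ R with IsStdRep R, g (Fin.cons 0 R) := by
  rw [sum_filter, ← (Fin.consEquiv fun _ => F).sum_comp, Fintype.sum_prod_type,
    Fintype.sum_eq_add 1 0 one_ne_zero]
  · simp [isStdRep_cons_iff, sum_filter, Fin.consEquiv]
  · intro a ha
    simp [isStdRep_cons_iff, Fin.consEquiv, ha.1, ha.2]

/-- Since `PRM_d` is spanned by the evaluations of the monomials of degree `d`, this says that `v`
is a full-weight vector of its dual. -/
def IsFullWeightDualVector {m : ℕ} (d : ℕ) (v : (Fin (m + 1) → F) → F) : Prop :=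
  (∀ Q, IsStdRep Q → v Q ≠ 0) ∧
    ∀ α : Fin (m + 1) → ℕ, ∑ i, α i = d → ∑ Q with IsStdRep Q, v Q * ∏ i, Q i ^ α i = 0

theorem isFullWeightDualVector_line {d : ℕ} (hd : d ≤ Fintype.card F - 1) {π : F[X]}
    (hπ : π.Monic) (hdeg : π.natDegree = Fintype.card F - 1 - d) (hroot : ∀ t, π.eval t ≠ 0) :
    IsFullWeightDualVector d fun Q : Fin 2 → F => if Q 0 = 0 then 1 else π.eval (Q 1) := by
  refine ⟨fun Q _ => by dsimp only; split_ifs <;> simp [hroot], fun α hα => ?_⟩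
  rw [sum_isStdRep_succ]
  simp only [isStdRep_fin_one_iff, sum_filter, Fin.cons_zero, Fin.cons_one,
    one_ne_zero, if_false, if_true, one_pow, one_mul, Fintype.sum_ite_eq', Fin.prod_univ_succ,
    Fin.prod_univ_zero, mul_one, Pi.one_apply, Fin.succ_zero_eq_one]
  rw [Fin.sum_univ_two] at hα
  rw [Fintype.sum_equiv (Equiv.funUnique (Fin 1) F) (fun x => π.eval (x 0) * x 0 ^ α 1)
      (fun t => π.eval t * t ^ α 1) fun _ => rfl,
    FiniteField.sum_eval_mul_pow_of_monic hπ hdeg hd (by omega)]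
  rcases eq_or_ne (α 0) 0 with h0 | h0
  · simp [h0, show α 1 = d by omega]
  · simp [zero_pow h0, show α 1 ≠ d by omega]

theorem IsFullWeightDualVector.cons {m d : ℕ} (hd : d < Fintype.card F - 1)
    {v : (Fin (m + 1) → F) → F} (hv : IsFullWeightDualVector d v) :
    IsFullWeightDualVector d
      fun Q : Fin (m + 2) → F => if Q 0 = 0 then v (Fin.tail Q) else 1 := by
  refine ⟨fun Q hQ => ?_, fun α hα => ?_⟩
  · rw [← Fin.cons_self_tail Q, isStdRep_cons_iff] at hQ
    dsimp only
    split_ifs with h0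
    · exact hv.1 _ (hQ.resolve_left (by simp [h0])).2
    · exact one_ne_zero
  have hle : ∀ i, α i ≤ d := fun i =>
    hα ▸ single_le_sum (fun _ _ => Nat.zero_le _) (mem_univ i)
  rw [Fin.sum_univ_succ] at hα
  rw [sum_isStdRep_succ]
  simp only [Fin.prod_cons_pow, Fin.cons_zero, Fin.tail_cons, one_ne_zero, if_false, if_true,
    one_pow, one_mul]
  rw [FiniteField.sum_prod_pow_eq_zero fun i => (hle _).trans_lt hd, zero_add]
  rcases eq_or_ne (α 0) 0 with h0 | h0
  · simp only [h0, pow_zero, one_mul]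
    exact hv.2 _ (by omega)
  · simp [zero_pow h0]

theorem exists_isFullWeightDualVector {m d : ℕ} (hm : 1 ≤ m) (hd : d < Fintype.card F - 2) :
    ∃ v : (Fin (m + 1) → F) → F, IsFullWeightDualVector d v := by
  induction m, hm using Nat.le_induction with
  | base =>
    obtain ⟨π, hπ, hdeg, hroot⟩ :=
      exists_monic_natDegree_eq_forall_eval_ne_zero F (e := Fintype.card F - 1 - d) (by omega)
    exact ⟨_, isFullWeightDualVector_line (by omega) hπ hdeg hroot⟩
  | succ m _ ih =>
    obtain ⟨v, hv⟩ := ih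
    exact ⟨_, hv.cons (by omega)⟩

end

theorem dual_PRM_has_full_weight_vector_general (F : Type*) [Field F] [Fintype F]
    (m d : ℕ) (hm : 1 ≤ m) (hd2 : d < Fintype.card F - 2) :
    ∃ v : (Fin (m + 1) → F) → F,
      (∀ Q : Fin (m + 1) → F, IsStdRep Q → v Q ≠ 0) ∧
      (∀ f : MvPolynomial (Fin (m + 1)) F, f.IsHomogeneous d →
        ∑ᶠ Q ∈ {Q : Fin (m + 1) → F | IsStdRep Q},
          v Q * MvPolynomial.eval Q f = 0) := by
  classical
  obtain ⟨v, hv0, hv⟩ := exists_isFullWeightDualVector hm hd2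
  refine ⟨v, hv0, fun f hf => ?_⟩
  rw [finsum_mem_eq_toFinset_sum, Set.toFinset_ofPred]
  exact MvPolynomial.sum_mul_eval_eq_zero_of_isHomogeneous hv hf

/-- For `1 ≤ d < q - 2`, there is a vector `v` of full Hamming
weight (all coordinates nonzero) in the dual of the projective Reed–Muller
code `PRM_d(q,m)`: it is Euclidean-orthogonal to the evaluation of every
homogeneous polynomial of degree `d` at the standard representatives. -/
theorem dual_PRM_has_full_weight_vector (F : Type*) [Field F] [Fintype F]
    (m d : ℕ) (hm : 1 ≤ m) (hd1 : 1 ≤ d) (hd2 : d < Fintype.card F - 2) :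
    ∃ v : (Fin (m + 1) → F) → F,
      (∀ Q : Fin (m + 1) → F, IsStdRep Q → v Q ≠ 0) ∧
      (∀ f : MvPolynomial (Fin (m + 1)) F, f.IsHomogeneous d →
        ∑ᶠ Q ∈ {Q : Fin (m + 1) → F | IsStdRep Q},
          v Q * MvPolynomial.eval Q f = 0) :=
  dual_PRM_has_full_weight_vector_general F m d hm hd2
end

section
/- Let q be a prime power, m ≥ 1, and let t ∈ F_q[x] be a monic polynomial of degree q−1−d with 1 ≤ d < q−2. Define v ∈ F_q^n indexed by the standard representatives of P^m by v_Q = t(z) if Q = (0,…,0,1,z) for some z ∈ F_q, and v_Q = 1 otherwise. Then for every monomial x_0^{α_0}⋯x_m^{α_m} of total degree d, one has ∑_{Q} v_Q · Q_0^{α_0}⋯Q_m^{α_m} = 0. -/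
open Finset Polynomial
open scoped Classical
set_option linter.unusedSectionVars false

section Aux
variable {F : Type*} [Field F] [Fintype F]

lemma stdrep_cons {m : ℕ} (x : F) (h : Fin (m + 1) → F) :
    IsStdRep (Fin.cons x h) ↔ x = 1 ∨ (x = 0 ∧ IsStdRep h) := by
  constructor
  · rintro ⟨i, hi1, hi0⟩
    rcases Fin.eq_zero_or_eq_succ i with rfl | ⟨j, rfl⟩
    · left; simpa using hi1
    · right
      refine ⟨by simpa using hi0 0 (by simp [Fin.lt_def]), j, by simpa using hi1, ?_⟩
      intro k hk
      simpa only [Fin.cons_succ] using hi0 k.succ (Fin.succ_lt_succ_iff.mpr hk)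
  · rintro (rfl | ⟨rfl, j, hj1, hj0⟩)
    · exact ⟨0, by simp, fun j hj => absurd hj (by simp)⟩
    · refine ⟨j.succ, by simpa using hj1, ?_⟩
      intro k hk
      rcases Fin.eq_zero_or_eq_succ k with rfl | ⟨l, rfl⟩
      · simp
      · rw [Fin.cons_succ]
        exact hj0 l (Fin.succ_lt_succ_iff.mp hk)

lemma sum_pow_card_sub_one' : ∑ x : F, x ^ (Fintype.card F - 1) = -1 := by
  classical
  have h1 : 1 < Fintype.card F := Fintype.one_lt_card
  have h2 : ∀ x : F, x ^ (Fintype.card F - 1) = 1 - if x = 0 then 1 else 0 := by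
    intro x
    split_ifs with hx
    · subst hx; rw [zero_pow (by omega)]; ring
    · rw [FiniteField.pow_card_sub_one_eq_one x hx]; ring
  rw [Finset.sum_congr rfl fun x _ => h2 x, Finset.sum_sub_distrib]
  simp [Finset.card_univ, FiniteField.cast_card_eq_zero]

set_option maxHeartbeats 1000000 in
lemma lemM : ∀ (m : ℕ) (α : Fin (m + 1) → ℕ), 0 < (∑ i, α i) → (∑ i, α i) < Fintype.card F - 1 →
    (∑ Q : Fin (m + 1) → F, (if IsStdRep Q then (1:F) else 0) * ∏ i, Q i ^ α i)
      = if ∀ j : Fin (m + 1), (j : ℕ) < m → α j = 0 then 1 else 0 := by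
  classical
  intro m
  induction m with
  | zero =>
    intro α h0 h1
    rw [if_pos (fun j hj => absurd hj (by omega))]
    have key : ∀ Q : Fin 1 → F, (if IsStdRep Q then (1:F) else 0) * ∏ i, Q i ^ α i
        = if Q 0 = 1 then (Q 0) ^ α 0 else 0 := by
      intro Q
      have hstd : IsStdRep Q ↔ Q 0 = 1 := by
        constructor
        · rintro ⟨i, hi1, -⟩; rwa [Subsingleton.elim (0 : Fin 1) i]
        · intro hx; exact ⟨0, hx, fun j hj => absurd hj (by simp)⟩
      rw [Fin.prod_univ_one]
      split_ifs with h h' h'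
      · rw [one_mul]
      · exact absurd (hstd.mp h) h'
      · exact absurd (hstd.mpr h') h
      · rw [zero_mul]
    rw [Fintype.sum_equiv (Equiv.funUnique (Fin 1) F) _
      (fun x : F => if x = 1 then x ^ α 0 else 0) (fun Q => key Q)]
    simp
  | succ n ih =>
    intro α h0 h1
    rw [← Fintype.sum_equiv (Fin.consEquiv fun _ : Fin (n + 2) => F)
      (fun p : F × (Fin (n + 1) → F) =>
        (if IsStdRep (Fin.cons p.1 p.2) then (1:F) else 0) * ∏ i, Fin.cons p.1 p.2 i ^ α i)
      (fun Q => (if IsStdRep Q then (1:F) else 0) * ∏ i, Q i ^ α i) (fun p => by rfl),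
      Fintype.sum_prod_type]
    have hmon : ∀ (x : F) (h : Fin (n + 1) → F),
        (∏ i, Fin.cons x h i ^ α i) = x ^ α 0 * ∏ i, h i ^ α i.succ := by
      intro x h
      rw [Fin.prod_univ_succ]
      simp [Fin.cons_succ]
    have hsucc : (∑ i, α i) = α 0 + ∑ i : Fin (n + 1), α i.succ := Fin.sum_univ_succ α
    have key : ∀ x : F, (∑ h : Fin (n + 1) → F,
        (if IsStdRep (Fin.cons x h) then (1:F) else 0) * ∏ i, Fin.cons x h i ^ α i)
        = if x = 1 then (∑ h : Fin (n + 1) → F, ∏ i, h i ^ α i.succ)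
          else if x = 0 then x ^ α 0 * ∑ h : Fin (n + 1) → F,
            (if IsStdRep h then (1:F) else 0) * ∏ i, h i ^ α i.succ
          else 0 := by
      intro x
      split_ifs with hx1 hx0
      · subst hx1
        apply Finset.sum_congr rfl
        intro h _
        rw [hmon, if_pos ((stdrep_cons _ _).mpr (Or.inl rfl)), one_pow, one_mul, one_mul]
      · subst hx0
        rw [Finset.mul_sum]
        apply Finset.sum_congr rfl
        intro h _
        have hiff : IsStdRep (Fin.cons (0:F) h) ↔ IsStdRep h := by
          rw [stdrep_cons]; simp
        rw [hmon]
        by_cases hh : IsStdRep h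
        · rw [if_pos (hiff.mpr hh), if_pos hh]; ring
        · rw [if_neg (fun c => hh (hiff.mp c)), if_neg hh]; ring
      · apply Finset.sum_eq_zero
        intro h _
        rw [if_neg, zero_mul]
        rw [stdrep_cons]
        rintro (h1 | ⟨h0', -⟩)
        · exact hx1 h1
        · exact hx0 h0'
    rw [Finset.sum_congr rfl fun x _ => key x]
    have hx1 : (∑ h : Fin (n + 1) → F, ∏ i, h i ^ α i.succ) = 0 := by
      have hps := Fintype.prod_sum (ι := Fin (n + 1)) (κ := fun _ => F)
        (fun i z => z ^ α i.succ)
      rw [← hps]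
      apply Finset.prod_eq_zero (Finset.mem_univ (0 : Fin (n + 1)))
      apply FiniteField.sum_pow_lt_card_sub_one
      calc α (Fin.succ 0) ≤ ∑ i, α i :=
            Finset.single_le_sum (fun i _ => Nat.zero_le _) (Finset.mem_univ _)
        _ < Fintype.card F - 1 := h1
    simp only [hx1]
    rw [Finset.sum_eq_single (0 : F)]
    · rw [if_neg zero_ne_one, if_pos rfl]
      by_cases ha0 : α 0 = 0
      · rw [ha0, pow_zero, one_mul]
        have h0' : 0 < ∑ i : Fin (n + 1), α i.succ := by omega
        have h1' : (∑ i : Fin (n + 1), α i.succ) < Fintype.card F - 1 := by omega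
        rw [ih _ h0' h1']
        by_cases hc : ∀ j : Fin (n + 1), (j : ℕ) < n → α j.succ = 0
        · rw [if_pos hc, if_pos]
          intro j hj
          rcases Fin.eq_zero_or_eq_succ j with rfl | ⟨k, rfl⟩
          · exact ha0
          · refine hc k ?_
            rw [Fin.val_succ] at hj; omega
        · rw [if_neg hc, if_neg]
          intro hall
          exact hc fun j hj => hall j.succ (by rw [Fin.val_succ]; omega)
      · rw [zero_pow ha0, zero_mul, if_neg]
        intro hall
        exact ha0 (hall 0 (by simp))
    · intro x _ hx
      by_cases hx1' : x = 1
      · rw [if_pos hx1']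
      · rw [if_neg hx1', if_neg hx]
    · intro h; exact absurd (Finset.mem_univ 0) h

lemma lemP (d : ℕ) (hd1 : 1 ≤ d) (hd2 : d < Fintype.card F - 2)
    (t : Polynomial F) (ht : t.Monic) (hdeg : t.natDegree = Fintype.card F - 1 - d)
    (a : ℕ) (ha : a ≤ d) :
    ∑ z : F, (t.eval z - 1) * z ^ a = if a = d then -1 else 0 := by
  have hq : 4 ≤ Fintype.card F := by omega
  have hza : ∑ z : F, z ^ a = 0 :=
    FiniteField.sum_pow_lt_card_sub_one F a (by omega)
  have split : ∀ z : F, (t.eval z - 1) * z ^ a = (t * X ^ a).eval z - z ^ a := by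
    intro z; simp [sub_mul]
  rw [Finset.sum_congr rfl fun z _ => split z, Finset.sum_sub_distrib, hza, sub_zero]
  have hdegle : (t * X ^ a).natDegree < Fintype.card F - 1 - d + a + 1 := by
    have h1 : (t * X ^ a).natDegree ≤ t.natDegree + (X ^ a : Polynomial F).natDegree :=
      Polynomial.natDegree_mul_le
    rw [hdeg, Polynomial.natDegree_X_pow] at h1
    omega
  rw [Finset.sum_congr rfl fun z _ => Polynomial.eval_eq_sum_range' hdegle z, Finset.sum_comm]
  simp_rw [← Finset.mul_sum]
  by_cases had : a = d
  · subst had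
    rw [if_pos rfl, show Fintype.card F - 1 - a + a + 1 = (Fintype.card F - 1) + 1 by omega,
      Finset.sum_range_succ]
    have h0 : ∀ k ∈ Finset.range (Fintype.card F - 1),
        (t * X ^ a).coeff k * ∑ z : F, z ^ k = 0 := by
      intro k hk
      rw [Finset.mem_range] at hk
      rw [FiniteField.sum_pow_lt_card_sub_one F k hk, mul_zero]
    rw [Finset.sum_eq_zero h0, zero_add]
    have hc : (t * X ^ a).coeff (Fintype.card F - 1) = 1 := by
      rw [Polynomial.coeff_mul_X_pow', if_pos (by omega),
        show Fintype.card F - 1 - a = t.natDegree by omega]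
      exact ht.coeff_natDegree
    rw [hc, sum_pow_card_sub_one', one_mul]
  · rw [if_neg had]
    apply Finset.sum_eq_zero
    intro k hk
    rw [Finset.mem_range] at hk
    rw [FiniteField.sum_pow_lt_card_sub_one F k (by omega), mul_zero]

end Aux

set_option maxHeartbeats 1000000 in
/-- Let `t` be monic of degree `q - 1 - d` with `1 ≤ d < q - 2`,
and let `v` take the value `t(z)` on the standard representatives of the form
`(0,…,0,1,z)` and `1` on every other standard representative. Then `v` is
orthogonal to the evaluation of every monomial of total degree `d`. -/
theorem vector_orthogonal_to_monomials (F : Type*) [Field F] [Fintype F]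
    (m d : ℕ) (hm : 1 ≤ m) (hd1 : 1 ≤ d) (hd2 : d < Fintype.card F - 2)
    (t : Polynomial F) (ht : t.Monic)
    (hdeg : t.natDegree = Fintype.card F - 1 - d)
    (v : (Fin (m + 1) → F) → F)
    (hv1 : ∀ Q : Fin (m + 1) → F,
      ((∀ j : Fin (m + 1), (j : ℕ) < m - 1 → Q j = 0) ∧ Q ⟨m - 1, by omega⟩ = 1) →
        v Q = t.eval (Q ⟨m, by omega⟩))
    (hv2 : ∀ Q : Fin (m + 1) → F,
      ¬((∀ j : Fin (m + 1), (j : ℕ) < m - 1 → Q j = 0) ∧ Q ⟨m - 1, by omega⟩ = 1) →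
        v Q = 1)
    (α : Fin (m + 1) → ℕ) (hα : ∑ i, α i = d) :
    ∑ᶠ Q ∈ {Q : Fin (m + 1) → F | IsStdRep Q}, v Q * ∏ i, Q i ^ α i = 0 := by
  classical
  have hq : 4 ≤ Fintype.card F := by omega
  have hm1 : m - 1 < m + 1 := by omega
  have hmm : m < m + 1 := by omega
  have hset : {Q : Fin (m + 1) → F | IsStdRep Q}
      = ↑(Finset.univ.filter fun Q : Fin (m + 1) → F => IsStdRep Q) := by
    ext Q; simp
  rw [hset, finsum_mem_coe_finset, Finset.sum_filter]
  have hsplit : ∀ Q : Fin (m + 1) → F,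
      (if IsStdRep Q then v Q * ∏ i, Q i ^ α i else 0)
      = (if IsStdRep Q then (1:F) else 0) * ∏ i, Q i ^ α i
        + (if IsStdRep Q then (v Q - 1) * ∏ i, Q i ^ α i else 0) := by
    intro Q
    split_ifs with h
    · ring
    · ring
  rw [Finset.sum_congr rfl fun Q _ => hsplit Q, Finset.sum_add_distrib]
  have hα0 : 0 < ∑ i, α i := by omega
  have hα1 : (∑ i, α i) < Fintype.card F - 1 := by omega
  rw [lemM m α hα0 hα1]
  -- second summand
  have hline_std : ∀ Q : Fin (m + 1) → F,
      ((∀ j : Fin (m + 1), (j : ℕ) < m - 1 → Q j = 0) ∧ Q ⟨m - 1, hm1⟩ = 1) → IsStdRep Q := by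
    rintro Q ⟨hz, ho⟩
    exact ⟨⟨m - 1, hm1⟩, ho, fun j hj => hz j (by simpa [Fin.lt_def] using hj)⟩
  have hsecond : ∀ Q : Fin (m + 1) → F,
      (if IsStdRep Q then (v Q - 1) * ∏ i, Q i ^ α i else 0)
      = (if ((∀ j : Fin (m + 1), (j : ℕ) < m - 1 → Q j = 0) ∧ Q ⟨m - 1, hm1⟩ = 1)
          then (t.eval (Q ⟨m, hmm⟩) - 1) * ∏ i, Q i ^ α i else 0) := by
    intro Q
    by_cases hL : (∀ j : Fin (m + 1), (j : ℕ) < m - 1 → Q j = 0) ∧ Q ⟨m - 1, hm1⟩ = 1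
    · rw [if_pos hL, if_pos (hline_std Q hL), hv1 Q hL]
    · rw [if_neg hL]
      by_cases hS : IsStdRep Q
      · rw [if_pos hS, hv2 Q hL, sub_self, zero_mul]
      · rw [if_neg hS]
  rw [Finset.sum_congr rfl fun Q _ => hsecond Q, ← Finset.sum_filter]
  -- reparametrize the line by z
  have hrec : ∀ Q : Fin (m + 1) → F,
      ((∀ j : Fin (m + 1), (j : ℕ) < m - 1 → Q j = 0) ∧ Q ⟨m - 1, hm1⟩ = 1) →
      (fun j : Fin (m + 1) =>
        if (j : ℕ) < m - 1 then (0:F) else if (j : ℕ) = m - 1 then 1 else Q ⟨m, hmm⟩) = Q := by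
    intro Q hQ
    funext j
    by_cases h1 : (j : ℕ) < m - 1
    · simp only [if_pos h1]
      exact (hQ.1 j h1).symm
    · rw [if_neg h1]
      by_cases h2 : (j : ℕ) = m - 1
      · rw [if_pos h2]
        have hj : j = ⟨m - 1, hm1⟩ := Fin.ext h2
        rw [hj]
        exact hQ.2.symm
      · have hjlt := j.isLt
        have hj : j = ⟨m, hmm⟩ := Fin.ext (show (j : ℕ) = m by omega)
        rw [if_neg h2, hj]
  have hbij : (∑ Q ∈ Finset.univ.filter (fun Q : Fin (m + 1) → F =>
        (∀ j : Fin (m + 1), (j : ℕ) < m - 1 → Q j = 0) ∧ Q ⟨m - 1, hm1⟩ = 1),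
        (t.eval (Q ⟨m, hmm⟩) - 1) * ∏ i, Q i ^ α i)
      = ∑ z : F, (t.eval z - 1) *
          ∏ i : Fin (m + 1),
            (if (i : ℕ) < m - 1 then (0:F) else if (i : ℕ) = m - 1 then 1 else z) ^ α i := by
    refine Finset.sum_bij' (fun Q _ => Q ⟨m, hmm⟩)
      (fun z _ => fun j : Fin (m + 1) =>
        if (j : ℕ) < m - 1 then (0:F) else if (j : ℕ) = m - 1 then 1 else z)
      (fun Q hQ => Finset.mem_univ _) ?_ ?_ ?_ ?_
    · intro z _
      rw [Finset.mem_filter]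
      refine ⟨Finset.mem_univ _, fun j hj => if_pos hj, ?_⟩
      show (if m - 1 < m - 1 then (0:F) else if m - 1 = m - 1 then 1 else z) = 1
      rw [if_neg (by omega), if_pos rfl]
    · intro Q hQ
      exact hrec Q (Finset.mem_filter.mp hQ).2
    · intro z _
      show (if m < m - 1 then (0:F) else if m = m - 1 then 1 else z) = z
      rw [if_neg (by omega), if_neg (by omega)]
    · intro Q hQ
      have hQ' := (Finset.mem_filter.mp hQ).2
      congr 1
      exact Finset.prod_congr rfl fun j _ => by rw [congrFun (hrec Q hQ') j]
  rw [hbij]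
  -- compute the monomial on the line
  have hpair : Finset.univ.filter (fun j : Fin (m + 1) => ¬ (j : ℕ) < m - 1)
      = {⟨m - 1, hm1⟩, ⟨m, hmm⟩} := by
    ext j
    have := j.isLt
    simp only [Finset.mem_filter, Finset.mem_univ, true_and, Finset.mem_insert,
      Finset.mem_singleton, Fin.ext_iff]
    omega
  have hne : (⟨m - 1, hm1⟩ : Fin (m + 1)) ≠ ⟨m, hmm⟩ := by
    simp only [ne_eq, Fin.ext_iff]
    omega
  have hmon : ∀ z : F,
      (∏ i : Fin (m + 1),
        (if (i : ℕ) < m - 1 then (0:F) else if (i : ℕ) = m - 1 then 1 else z) ^ α i)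
      = (∏ j ∈ Finset.univ.filter (fun j : Fin (m + 1) => (j : ℕ) < m - 1), (0:F) ^ α j)
        * z ^ α ⟨m, hmm⟩ := by
    intro z
    rw [← Finset.prod_filter_mul_prod_filter_not Finset.univ
      (fun j : Fin (m + 1) => (j : ℕ) < m - 1)]
    congr 1
    · refine Finset.prod_congr rfl fun j hj => ?_
      rw [Finset.mem_filter] at hj
      rw [if_pos hj.2]
    · rw [hpair, Finset.prod_pair hne]
      have e1 : (if ((⟨m - 1, hm1⟩ : Fin (m + 1)) : ℕ) < m - 1 then (0:F)
          else if ((⟨m - 1, hm1⟩ : Fin (m + 1)) : ℕ) = m - 1 then 1 else z) = 1 := by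
        show (if m - 1 < m - 1 then (0:F) else if m - 1 = m - 1 then 1 else z) = 1
        rw [if_neg (by omega), if_pos rfl]
      have e2 : (if ((⟨m, hmm⟩ : Fin (m + 1)) : ℕ) < m - 1 then (0:F)
          else if ((⟨m, hmm⟩ : Fin (m + 1)) : ℕ) = m - 1 then 1 else z) = z := by
        show (if m < m - 1 then (0:F) else if m = m - 1 then 1 else z) = z
        rw [if_neg (by omega), if_neg (by omega)]
      rw [e1, e2, one_pow, one_mul]
  rw [Finset.sum_congr rfl fun z _ => by rw [hmon z]]
  have hsum2 : (∑ z : F, (t.eval z - 1) *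
      ((∏ j ∈ Finset.univ.filter (fun j : Fin (m + 1) => (j : ℕ) < m - 1), (0:F) ^ α j)
        * z ^ α ⟨m, hmm⟩))
      = (∏ j ∈ Finset.univ.filter (fun j : Fin (m + 1) => (j : ℕ) < m - 1), (0:F) ^ α j)
        * ∑ z : F, (t.eval z - 1) * z ^ α ⟨m, hmm⟩ := by
    rw [Finset.mul_sum]
    exact Finset.sum_congr rfl fun z _ => by ring
  rw [hsum2]
  have hale : α ⟨m, hmm⟩ ≤ d := by
    rw [← hα]
    exact Finset.single_le_sum (fun i _ => Nat.zero_le _) (Finset.mem_univ _)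
  rw [lemP d hd1 hd2 t ht hdeg _ hale]
  -- split the degree sum
  have hαsplit : (∑ j ∈ Finset.univ.filter (fun j : Fin (m + 1) => (j : ℕ) < m - 1), α j)
      + (α ⟨m - 1, hm1⟩ + α ⟨m, hmm⟩) = d := by
    rw [← hα, ← Finset.sum_filter_add_sum_filter_not Finset.univ
      (fun j : Fin (m + 1) => (j : ℕ) < m - 1) α, hpair, Finset.sum_pair hne]
  by_cases hsmall : ∀ j : Fin (m + 1), (j : ℕ) < m - 1 → α j = 0
  · have hc1 : (∏ j ∈ Finset.univ.filter (fun j : Fin (m + 1) => (j : ℕ) < m - 1),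
        (0:F) ^ α j) = 1 := by
      refine Finset.prod_eq_one fun j hj => ?_
      rw [Finset.mem_filter] at hj
      rw [hsmall j hj.2, pow_zero]
    have hzero : (∑ j ∈ Finset.univ.filter (fun j : Fin (m + 1) => (j : ℕ) < m - 1), α j)
        = 0 := Finset.sum_eq_zero fun j hj => hsmall j (Finset.mem_filter.mp hj).2
    rw [hc1, one_mul]
    by_cases hb : α ⟨m - 1, hm1⟩ = 0
    · have haa : α ⟨m, hmm⟩ = d := by omega
      rw [if_pos haa, if_pos]
      · ring
      · intro j hj
        by_cases h1 : (j : ℕ) < m - 1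
        · exact hsmall j h1
        · have hj' : j = ⟨m - 1, hm1⟩ := Fin.ext (show (j : ℕ) = m - 1 by omega)
          rw [hj']
          exact hb
    · have haa : α ⟨m, hmm⟩ ≠ d := by omega
      rw [if_neg haa, if_neg]
      · ring
      · intro hall
        exact hb (hall ⟨m - 1, hm1⟩ (show m - 1 < m by omega))
  · push_neg at hsmall
    obtain ⟨j0, hj0, hj0'⟩ := hsmall
    have hc0 : (∏ j ∈ Finset.univ.filter (fun j : Fin (m + 1) => (j : ℕ) < m - 1),
        (0:F) ^ α j) = 0 := by
      refine Finset.prod_eq_zero (Finset.mem_filter.mpr ⟨Finset.mem_univ _, hj0⟩) ?_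
      exact zero_pow hj0'
    rw [hc0, zero_mul, if_neg]
    · ring
    · intro hall
      exact hj0' (hall j0 (by omega))
end

section
/- Let q be a prime power, m ≥ 1, and let d_1, d_2 be positive integers. Then the componentwise (Schur) product of the projective Reed–Muller codes PRM_{d_1}(q,m) and PRM_{d_2}(q,m) equals PRM_{d_1+d_2}(q,m). -/
/-- The projective Reed–Muller code of degree `d`: the span of the evaluations
of homogeneous polynomials of degree `d` at the standard representatives of
`P^m`. -/
def PRM (F : Type*) [Field F] (m d : ℕ) :
    Submodule F ({Q : Fin (m + 1) → F // IsStdRep Q} → F) :=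
  Submodule.span F {c | ∃ f : MvPolynomial (Fin (m + 1)) F,
    f.IsHomogeneous d ∧ c = fun Q => MvPolynomial.eval Q.1 f}

open MvPolynomial Pointwise

theorem MvPolynomial.homogeneousSubmodule_mul_homogeneousSubmodule {σ R : Type*}
    [CommSemiring R] (m n : ℕ) :
    homogeneousSubmodule σ R m * homogeneousSubmodule σ R n =
      homogeneousSubmodule σ R (m + n) := by
  refine le_antisymm (homogeneousSubmodule_mul m n) ?_
  rw [homogeneousSubmodule_eq_finsupp_supported, AddMonoidAlgebra.supported_eq_span_single,
    Submodule.span_le]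
  rintro _ ⟨s, hs : s.degree = m + n, rfl⟩
  obtain ⟨t, hts, ht⟩ := s.exists_le_degree_eq m (by omega)
  obtain ⟨u, rfl⟩ := le_iff_exists_add.mp hts
  have hu : u.degree = n := by rw [map_add] at hs; omega
  change monomial (t + u) (1 : R) ∈ _
  rw [← one_mul (1 : R), ← monomial_mul]
  exact Submodule.mul_mem_mul (isHomogeneous_monomial 1 ht) (isHomogeneous_monomial 1 hu)

noncomputable def evalAtStdReps (F : Type*) [Field F] (m : ℕ) :
    MvPolynomial (Fin (m + 1)) F →ₐ[F] ({Q : Fin (m + 1) → F // IsStdRep Q} → F) :=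
  AlgHom.pi fun Q => aeval Q.1

theorem PRM_eq_map_homogeneousSubmodule (F : Type*) [Field F] (m d : ℕ) :
    PRM F m d = (homogeneousSubmodule (Fin (m + 1)) F d).map (evalAtStdReps F m).toLinearMap := by
  rw [PRM, ← Submodule.span_eq (homogeneousSubmodule _ F d), ← Submodule.span_image]
  congr 1
  ext c
  simp [evalAtStdReps, eq_comm, funext_iff]

theorem schur_product_PRM_general (F : Type*) [Field F] (m d₁ d₂ : ℕ) :
    Submodule.span F {u : {Q : Fin (m + 1) → F // IsStdRep Q} → F |
        ∃ a ∈ PRM F m d₁, ∃ b ∈ PRM F m d₂, u = a * b} =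
      PRM F m (d₁ + d₂) := by
  have hproducts : {u : {Q : Fin (m + 1) → F // IsStdRep Q} → F |
      ∃ a ∈ PRM F m d₁, ∃ b ∈ PRM F m d₂, u = a * b} =
      (PRM F m d₁ : Set _) * (PRM F m d₂ : Set _) := by
    ext u
    simp [Set.mem_mul, eq_comm]
  rw [hproducts, ← Submodule.mul_eq_span_mul_set, PRM_eq_map_homogeneousSubmodule,
    PRM_eq_map_homogeneousSubmodule, PRM_eq_map_homogeneousSubmodule, ← Submodule.map_mul,
    homogeneousSubmodule_mul_homogeneousSubmodule]

/-- The Schur (componentwise) product of the projective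
Reed–Muller codes of degrees `d₁` and `d₂` equals the projective Reed–Muller
code of degree `d₁ + d₂`. -/
theorem schur_product_PRM (F : Type*) [Field F] [Fintype F] (m d₁ d₂ : ℕ)
    (hm : 1 ≤ m) (hd₁ : 0 < d₁) (hd₂ : 0 < d₂) :
    Submodule.span F {u : {Q : Fin (m + 1) → F // IsStdRep Q} → F |
        ∃ a ∈ PRM F m d₁, ∃ b ∈ PRM F m d₂, u = a * b} =
      PRM F m (d₁ + d₂) :=
  schur_product_PRM_general F m d₁ d₂
end

section
/- Let q be a prime power and d a positive integer with d ≡ 0 (mod q−1) and d ≤ m(q−1). Then the all-ones vector (1,…,1) ∈ F_q^n lies in the dual code PRM_d(q,m)^⊥, i.e., for every homogeneous polynomial f of degree d, the sum of the values of f over the standard representatives of P^m is zero. -/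
section Aux

variable {F : Type*} [Field F] {m : ℕ}

open MvPolynomial Finset

open Classical in
/-- The index of the leftmost nonzero coordinate of `v` (junk value `0` if `v = 0`). -/
noncomputable def leadIdx (v : Fin (m + 1) → F) : Fin (m + 1) :=
  if h : ∃ i, v i ≠ 0 then
    (Finset.univ.filter fun i => v i ≠ 0).min'
      (by obtain ⟨i, hi⟩ := h; exact ⟨i, Finset.mem_filter.2 ⟨Finset.mem_univ _, hi⟩⟩)
  else 0

lemma leadIdx_spec {v : Fin (m + 1) → F} (h : ∃ i, v i ≠ 0) :
    v (leadIdx v) ≠ 0 ∧ ∀ j, j < leadIdx v → v j = 0 := by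
  classical
  rw [leadIdx, dif_pos h]
  constructor
  · have := Finset.min'_mem (Finset.univ.filter fun i => v i ≠ 0)
      (by obtain ⟨i, hi⟩ := h; exact ⟨i, Finset.mem_filter.2 ⟨Finset.mem_univ _, hi⟩⟩)
    simpa using this
  · intro j hj
    by_contra hvj
    have hle := Finset.min'_le (Finset.univ.filter fun i => v i ≠ 0) j
      (Finset.mem_filter.2 ⟨Finset.mem_univ _, hvj⟩)
    exact absurd hj (not_lt.mpr hle)

lemma leadIdx_eq {v : Fin (m + 1) → F} {i : Fin (m + 1)} (h1 : v i ≠ 0)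
    (h0 : ∀ j, j < i → v j = 0) : leadIdx v = i := by
  obtain ⟨ha, hb⟩ := leadIdx_spec ⟨i, h1⟩
  rcases lt_trichotomy (leadIdx v) i with hlt | he | hgt
  · exact absurd (h0 _ hlt) ha
  · exact he
  · exact absurd (hb _ hgt) h1

lemma eval_smul_of_isHomogeneous {d : ℕ} {f : MvPolynomial (Fin (m + 1)) F}
    (hf : f.IsHomogeneous d) (c : F) (x : Fin (m + 1) → F) :
    MvPolynomial.eval (c • x) f = c ^ d * MvPolynomial.eval x f := by
  classical
  rw [eval_eq', eval_eq', Finset.mul_sum]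
  refine Finset.sum_congr rfl fun s hs => ?_
  have h1 : (Finsupp.weight (1 : Fin (m + 1) → ℕ)) s = d :=
    hf (MvPolynomial.mem_support_iff.mp hs)
  have hdeg : ∑ i, s i = d := by
    rw [Finsupp.weight_apply, Finsupp.sum_fintype] at h1
    · simpa using h1
    · intro i; simp
  have hprod : ∏ i, (c • x) i ^ s i = c ^ d * ∏ i, x i ^ s i := by
    simp only [Pi.smul_apply, smul_eq_mul, mul_pow]
    rw [Finset.prod_mul_distrib, Finset.prod_pow_eq_pow_sum, hdeg]
  rw [hprod]; ring

end Aux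

/-- If `d > 0`, `(q - 1) ∣ d` and `d ≤ m(q - 1)`, then the
all-ones vector lies in the dual of `PRM_d(q,m)`: the sum of the values of
every homogeneous polynomial of degree `d` over the standard representatives
of `P^m` is zero. -/
theorem all_ones_in_dual_PRM (F : Type*) [Field F] [Fintype F] (m d : ℕ)
    (hm : 1 ≤ m) (hd : 0 < d) (hdvd : (Fintype.card F - 1) ∣ d)
    (hdm : d ≤ m * (Fintype.card F - 1)) :
    ∀ f : MvPolynomial (Fin (m + 1)) F, f.IsHomogeneous d →
      ∑ᶠ Q ∈ {Q : Fin (m + 1) → F | IsStdRep Q}, MvPolynomial.eval Q f = 0 := by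
  classical
  intro f hf
  have hq2 : 2 ≤ Fintype.card F := Fintype.one_lt_card
  -- power congruence: c^d = 1 for c ≠ 0
  have hpow : ∀ c : F, c ≠ 0 → c ^ d = 1 := by
    intro c hc
    obtain ⟨k, hk⟩ := hdvd
    rw [hk, pow_mul, FiniteField.pow_card_sub_one_eq_one c hc, one_pow]
  -- convert finsum to a Finset sum
  have hset : {Q : Fin (m + 1) → F | IsStdRep Q}
      = ↑(Finset.univ.filter fun Q : Fin (m + 1) → F => IsStdRep Q) := by
    ext Q; simp
  rw [hset, finsum_mem_coe_finset]
  set R := Finset.univ.filter fun Q : Fin (m + 1) → F => IsStdRep Q with hR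
  set S := ∑ Q ∈ R, MvPolynomial.eval Q f with hS
  -- total sum over all vectors vanishes
  have htot : ∑ v : Fin (m + 1) → F, MvPolynomial.eval v f = 0 := by
    apply MvPolynomial.sum_eval_eq_zero
    calc f.totalDegree ≤ d := hf.totalDegree_le
      _ < (Fintype.card F - 1) * Fintype.card (Fin (m + 1)) := by
          rw [Fintype.card_fin]
          calc d ≤ m * (Fintype.card F - 1) := hdm
            _ < (m + 1) * (Fintype.card F - 1) := by
                have : 1 ≤ Fintype.card F - 1 := by omega
                nlinarith
            _ = (Fintype.card F - 1) * (m + 1) := by ring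
  -- eval at 0 is 0
  have h0 : MvPolynomial.eval (0 : Fin (m + 1) → F) f = 0 := by
    have := eval_smul_of_isHomogeneous hf 0 0
    rw [smul_zero, zero_pow hd.ne', zero_mul] at this
    exact this
  -- sum over nonzero vectors equals (q-1) • S
  have hbij : ∑ v ∈ (Finset.univ.erase (0 : Fin (m + 1) → F)), MvPolynomial.eval v f
      = ∑ p ∈ (Finset.univ : Finset Fˣ) ×ˢ R, MvPolynomial.eval p.2 f := by
    refine Finset.sum_bij'
      (fun v hv => (Units.mk0 (v (leadIdx v)) ?_, (v (leadIdx v))⁻¹ • v))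
      (fun p _ => (p.1 : F) • p.2) ?_ ?_ ?_ ?_ ?_
    · -- v (leadIdx v) ≠ 0
      have hvne : v ≠ 0 := Finset.ne_of_mem_erase hv
      exact (leadIdx_spec (Function.ne_iff.mp hvne)).1
    · -- maps into units × R
      intro v hv
      have hvne : v ≠ 0 := Finset.ne_of_mem_erase hv
      obtain ⟨h1, h2⟩ := leadIdx_spec (F := F) (Function.ne_iff.mp hvne)
      refine Finset.mem_product.mpr ⟨Finset.mem_univ _, ?_⟩
      rw [hR, Finset.mem_filter]
      refine ⟨Finset.mem_univ _, leadIdx v, ?_, ?_⟩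
      · simp [inv_mul_cancel₀ h1]
      · intro j hj; simp [h2 j hj]
    · -- smul of a std rep is nonzero
      intro p hp
      have hp2 : IsStdRep p.2 := by
        have := (Finset.mem_product.mp hp).2
        rw [hR, Finset.mem_filter] at this
        exact this.2
      obtain ⟨i, hi1, _⟩ := hp2
      refine Finset.mem_erase.mpr ⟨?_, Finset.mem_univ _⟩
      intro h0'
      have : ((p.1 : F) • p.2) i = 0 := by
        have := congrFun h0' i; simpa using this
      rw [Pi.smul_apply, hi1, smul_eq_mul, mul_one] at this
      exact p.1.ne_zero this
    · -- left inverse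
      intro v hv
      have hvne : v ≠ 0 := Finset.ne_of_mem_erase hv
      obtain ⟨h1, _⟩ := leadIdx_spec (F := F) (Function.ne_iff.mp hvne)
      simp [smul_smul, mul_inv_cancel₀ h1]
    · -- right inverse
      intro p hp
      have hp2 : IsStdRep p.2 := by
        have := (Finset.mem_product.mp hp).2
        rw [hR, Finset.mem_filter] at this
        exact this.2
      obtain ⟨i, hi1, hi0⟩ := hp2
      have hlead : leadIdx ((p.1 : F) • p.2) = i := by
        apply leadIdx_eq
        · rw [Pi.smul_apply, hi1, smul_eq_mul, mul_one]; exact p.1.ne_zero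
        · intro j hj; rw [Pi.smul_apply, hi0 j hj, smul_zero]
      have hval : ((p.1 : F) • p.2) (leadIdx ((p.1 : F) • p.2)) = (p.1 : F) := by
        rw [hlead, Pi.smul_apply, hi1, smul_eq_mul, mul_one]
      refine Prod.ext ?_ ?_
      · exact Units.ext (by simpa using hval)
      · simp only [hval, smul_smul, inv_mul_cancel₀ p.1.ne_zero, one_smul]
    · -- values agree
      intro v hv
      have hvne : v ≠ 0 := Finset.ne_of_mem_erase hv
      obtain ⟨h1, _⟩ := leadIdx_spec (F := F) (Function.ne_iff.mp hvne)
      have := eval_smul_of_isHomogeneous hf (v (leadIdx v))⁻¹ v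
      rw [hpow _ (inv_ne_zero h1), one_mul] at this
      exact this.symm
  -- assemble
  have hsplit : ∑ v : Fin (m + 1) → F, MvPolynomial.eval v f
      = MvPolynomial.eval (0 : Fin (m + 1) → F) f
        + ∑ v ∈ (Finset.univ.erase (0 : Fin (m + 1) → F)), MvPolynomial.eval v f :=
    (Finset.add_sum_erase _ _ (Finset.mem_univ _)).symm
  have hprodsum : ∑ p ∈ (Finset.univ : Finset Fˣ) ×ˢ R, MvPolynomial.eval p.2 f
      = (Fintype.card F - 1) • S := by
    rw [Finset.sum_product]
    simp [hS, Finset.card_univ, Fintype.card_units]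
  have hcast : ((Fintype.card F - 1 : ℕ) : F) = -1 := by
    rw [Nat.cast_sub (by omega), FiniteField.cast_card_eq_zero, Nat.cast_one]
    ring
  have : (0 : F) = -S := by
    calc (0 : F) = ∑ v : Fin (m + 1) → F, MvPolynomial.eval v f := htot.symm
      _ = 0 + (Fintype.card F - 1) • S := by rw [hsplit, h0, hbij, hprodsum]
      _ = ((Fintype.card F - 1 : ℕ) : F) * S := by rw [zero_add, nsmul_eq_mul]
      _ = -S := by rw [hcast]; ring
  exact neg_eq_zero.mp this.symm
end

section
/- Let q be a prime power, m ≥ 1, and d = λ(q−1) with 1 ≤ λ ≤ m. Then the projective Reed–Muller code C = PRM_d(q^2, m) over F_{q^2} satisfies C ⊆ C^{⊥_h}, i.e., for all homogeneous polynomials f, g of degree d over F_{q^2}, ∑_{Q} f(Q) g(Q)^q = 0, where the sum is over the standard representatives of the points of P^m over F_{q^2}. -/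
open Finset MvPolynomial

theorem MvPolynomial.IsHomogeneous.eval_smul {σ R : Type*} [CommSemiring R]
    {φ : MvPolynomial σ R} {n : ℕ} (hφ : φ.IsHomogeneous n) (c : R) (x : σ → R) :
    eval (c • x) φ = c ^ n * eval x φ := by
  rw [eval_eq, eval_eq, mul_sum]
  refine sum_congr rfl fun d hd => ?_
  have hdeg : ∑ i ∈ d.support, d i = n := by
    by_contra h
    exact mem_support_iff.mp hd (hφ.coeff_eq_zero h)
  simp only [Pi.smul_apply, smul_eq_mul, mul_pow, prod_mul_distrib, prod_pow_eq_pow_sum, hdeg]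
  ring

section

variable {F : Type*} [Field F] {m : ℕ}

namespace IsStdRep

theorem ne_zero {Q : Fin (m + 1) → F} (hQ : IsStdRep Q) : Q ≠ 0 := by
  obtain ⟨i, hi, -⟩ := hQ
  exact fun h => one_ne_zero (hi.symm.trans (congrFun h i))

-- The first nonzero coordinate of `c • Q` sits at the leading `1` of `Q` and equals `c`.
theorem eq_of_smul_eq {Q Q' : Fin (m + 1) → F} (hQ : IsStdRep Q) (hQ' : IsStdRep Q')
    {c c' : F} (hc : c ≠ 0) (hc' : c' ≠ 0) (h : c • Q = c' • Q') : c = c' ∧ Q = Q' := by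
  obtain ⟨i, hi, hlt⟩ := hQ
  obtain ⟨i', hi', hlt'⟩ := hQ'
  have hii' : i = i' := by
    rcases lt_trichotomy i i' with h' | h' | h'
    · have := congrFun h i
      simp [hi, hlt' i h', hc] at this
    · exact h'
    · have := congrFun h i'
      simp [hi', hlt i' h'] at this
      exact absurd this.symm hc'
  subst hii'
  have hcc' : c = c' := by simpa [hi, hi'] using congrFun h i
  subst hcc'
  exact ⟨rfl, smul_right_injective _ hc h⟩

theorem exists_smul_eq {x : Fin (m + 1) → F} (hx : x ≠ 0) :
    ∃ c ≠ (0 : F), ∃ Q, IsStdRep Q ∧ c • Q = x := by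
  obtain ⟨i, hi, hmin⟩ := WellFounded.has_min wellFounded_lt {j | x j ≠ 0}
    (Function.ne_iff.mp hx)
  refine ⟨x i, hi, (x i)⁻¹ • x, ⟨i, inv_mul_cancel₀ hi, fun j hj => ?_⟩,
    smul_inv_smul₀ hi x⟩
  have : x j = 0 := by_contra fun h => hmin j h hj
  simp [this]

end IsStdRep

variable [Fintype F]

variable (F m) in
noncomputable def stdReps : Finset (Fin (m + 1) → F) :=
  (Set.toFinite {Q | IsStdRep Q}).toFinset

theorem mem_stdReps {Q : Fin (m + 1) → F} :
    Q ∈ stdReps F m ↔ IsStdRep Q := by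
  simp [stdReps]

theorem sum_eq_apply_zero_add_sum_units_smul_stdReps [DecidableEq F] {M : Type*}
    [AddCommMonoid M] (φ : (Fin (m + 1) → F) → M) :
    ∑ x, φ x = φ 0 + ∑ c : Fˣ, ∑ Q ∈ stdReps F m, φ ((c : F) • Q) := by
  rw [← add_sum_erase univ φ (mem_univ 0), ← sum_product']
  congr 1
  refine (sum_bij (fun p _ => (p.1 : F) • p.2) (fun p hp => ?_) (fun p hp p' hp' h => ?_)
    (fun x hx => ?_) (fun _ _ => rfl)).symm
  · exact mem_erase.mpr ⟨smul_ne_zero p.1.ne_zero (mem_stdReps.mp (mem_product.mp hp).2).ne_zero,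
      mem_univ _⟩
  · obtain ⟨hc, hQ⟩ := (mem_stdReps.mp (mem_product.mp hp).2).eq_of_smul_eq
      (mem_stdReps.mp (mem_product.mp hp').2) p.1.ne_zero p'.1.ne_zero h
    exact Prod.ext (Units.ext hc) hQ
  · obtain ⟨c, hc, Q, hQ, rfl⟩ := IsStdRep.exists_smul_eq (ne_of_mem_erase hx)
    exact ⟨(Units.mk0 c hc, Q), mem_product.mpr ⟨mem_univ _, mem_stdReps.mpr hQ⟩, rfl⟩

theorem sum_stdReps_eval_eq_zero {h : MvPolynomial (Fin (m + 1)) F} {e : ℕ}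
    (hh : h.IsHomogeneous e) (he0 : e ≠ 0) (hdvd : Fintype.card F - 1 ∣ e)
    (hlt : e < (Fintype.card F - 1) * (m + 1)) :
    ∑ Q ∈ stdReps F m, eval Q h = 0 := by
  classical
  have hall := sum_eval_eq_zero h (by simpa using hh.totalDegree_le.trans_lt hlt)
  have hzero : eval 0 h = 0 := by simpa [zero_pow he0] using hh.eval_smul 0 0
  rw [sum_eq_apply_zero_add_sum_units_smul_stdReps] at hall
  simp only [hh.eval_smul, hzero, zero_add, ← mul_sum, ← sum_mul, FiniteField.sum_pow_units,
    if_pos hdvd, neg_one_mul, neg_eq_zero] at hall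
  exact hall

end

theorem PRM_hermitian_self_orthogonal_general (K : Type*) [Field K] [Fintype K]
    (q m d lam : ℕ) (hq : Fintype.card K = q ^ 2)
    (hlam1 : 1 ≤ lam) (hlam : lam ≤ m) (hd : d = lam * (q - 1))
    (f g : MvPolynomial (Fin (m + 1)) K)
    (hf : f.IsHomogeneous d) (hg : g.IsHomogeneous d) :
    ∑ᶠ Q ∈ {Q : Fin (m + 1) → K | IsStdRep Q},
      MvPolynomial.eval Q f * (MvPolynomial.eval Q g) ^ q = 0 := by
  have hdeg : d + d * q = lam * (Fintype.card K - 1) := by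
    rw [hq, ← one_pow 2, Nat.sq_sub_sq, hd]
    ring
  have hcard : 1 < Fintype.card K := Fintype.one_lt_card
  rw [finsum_mem_eq_finite_toFinset_sum _ (Set.toFinite _)]
  simp_rw [← map_pow, ← map_mul]
  refine sum_stdReps_eval_eq_zero (hf.mul (hg.pow q)) ?_ ?_ ?_ <;> rw [hdeg]
  · exact Nat.mul_ne_zero (by omega) (by omega)
  · exact dvd_mul_left _ _
  · rw [mul_comm]
    exact Nat.mul_lt_mul_of_pos_left (by omega) (by omega)

/-- For `d = λ(q - 1)` with `1 ≤ λ ≤ m`, the projective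
Reed–Muller code `PRM_d(q², m)` is self-orthogonal for the Hermitian inner
product: for all homogeneous `f, g` of degree `d` over `F_{q²}`,
`∑_Q f(Q)·g(Q)^q = 0` over the standard representatives of `P^m`. -/
theorem PRM_hermitian_self_orthogonal (K : Type*) [Field K] [Fintype K]
    (q m d lam : ℕ) (hq : Fintype.card K = q ^ 2) (hm : 1 ≤ m)
    (hlam1 : 1 ≤ lam) (hlam : lam ≤ m) (hd : d = lam * (q - 1))
    (f g : MvPolynomial (Fin (m + 1)) K)
    (hf : f.IsHomogeneous d) (hg : g.IsHomogeneous d) :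
    ∑ᶠ Q ∈ {Q : Fin (m + 1) → K | IsStdRep Q},
      MvPolynomial.eval Q f * (MvPolynomial.eval Q g) ^ q = 0 :=
  PRM_hermitian_self_orthogonal_general K q m d lam hq hlam1 hlam hd f g hf hg
end

section
/- Let q be a prime power, m ≥ 1, 1 ≤ d < q−2, and let t ∈ F_{q^2}[x] be monic of degree q−1−d with t(z) ≠ 0 for all z ∈ F_{q^2}. Define v ∈ F_{q^2}^n indexed by standard representatives of P^m over F_{q^2} by v_Q = t(z) if Q = (0,…,0,1,z), and v_Q = 1 otherwise, and set w = v^{q+1} (componentwise). Then w ∈ F_q^n, w has Hamming weight n, and for all monomials x^α, x^β of total degree d in m+1 variables, ∑_Q w_Q · Q^{α + qβ} = 0; i.e., w ∈ (PRM_d(q^2,m) ⋆ PRM_d(q^2,m)^q)^⊥. -/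
open Finset Polynomial

section AuxHelpers
variable {K : Type*} [Field K] [Fintype K] {q : ℕ}

private lemma aux_sum_pow_top (hq : Fintype.card K = q ^ 2) (hq1 : 2 ≤ q) :
    ∑ z : K, z ^ (q ^ 2 - 1) = -1 := by
  classical
  have h4 : 4 ≤ q ^ 2 := by nlinarith
  have h : ∀ z : K, z ^ (q ^ 2 - 1) = if z = 0 then 0 else 1 := by
    intro z
    split
    · rename_i hz; rw [hz]; exact zero_pow (by omega)
    · rename_i hz; exact hq ▸ FiniteField.pow_card_sub_one_eq_one z hz
  rw [Finset.sum_congr rfl (fun z _ => h z)]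
  rw [Finset.sum_ite]
  simp only [Finset.sum_const, smul_zero, zero_add, nsmul_eq_mul, mul_one]
  have hcard : (Finset.univ.filter (fun z : K => ¬ z = 0)).card = q ^ 2 - 1 := by
    rw [Finset.filter_not]
    rw [Finset.card_sdiff_of_subset (by simp)]
    have h1 : (Finset.univ.filter (fun z : K => z = 0)) = {0} := by
      ext z; simp
    rw [h1, Finset.card_singleton, Finset.card_univ, hq]
  rw [hcard]
  have h0 : ((q ^ 2 : ℕ) : K) = 0 := by rw [← hq]; exact FiniteField.cast_card_eq_zero K
  rw [Nat.cast_sub (by omega : 1 ≤ q ^ 2), h0]; simp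

private lemma aux_sum_pow_lo (hq : Fintype.card K = q ^ 2) {e : ℕ} (he : e < q ^ 2 - 1) :
    ∑ z : K, z ^ e = 0 :=
  FiniteField.sum_pow_lt_card_sub_one K e (by rw [hq]; exact he)

private lemma aux_sum_eval_eq (hq : Fintype.card K = q ^ 2) (hq1 : 2 ≤ q)
    (p : K[X]) (hdeg : p.natDegree ≤ q ^ 2 - 1) :
    ∑ z : K, p.eval z = - p.coeff (q ^ 2 - 1) := by
  have h4 : 4 ≤ q ^ 2 := by nlinarith
  set N := q ^ 2 - 1 with hNdef
  have hsplit : q ^ 2 = N + 1 := by omega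
  have h : ∀ z : K, p.eval z = ∑ k ∈ Finset.range (q ^ 2), p.coeff k * z ^ k := fun z =>
    eval_eq_sum_range' (lt_of_le_of_lt hdeg (by omega)) z
  rw [Finset.sum_congr rfl (fun z _ => h z), Finset.sum_comm]
  rw [hsplit, Finset.sum_range_succ]
  rw [Finset.sum_eq_zero, zero_add]
  · rw [← Finset.mul_sum, hNdef, aux_sum_pow_top hq hq1]; ring
  · intro k hk
    rw [Finset.mem_range] at hk
    rw [← Finset.mul_sum, aux_sum_pow_lo hq (hNdef ▸ hk), mul_zero]

private lemma aux_sum_t_pow {d : ℕ} (hq : Fintype.card K = q ^ 2) (hd2 : d + 2 < q)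
    {t : K[X]} (ht : t.Monic) (hdeg : t.natDegree = q - 1 - d)
    {e : ℕ} (he : e ≤ d * (q + 1)) :
    ∑ z : K, (t.eval z) ^ (q + 1) * z ^ e = if e = d * (q + 1) then -1 else 0 := by
  classical
  obtain ⟨a, ha⟩ : ∃ a, q = d + 3 + a := ⟨q - d - 3, by omega⟩
  have h2 : q - 1 - d = a + 2 := by omega
  set p : K[X] := t ^ (q + 1) * X ^ e with hp
  have hpm : p.Monic := (ht.pow _).mul (monic_X_pow e)
  have hpd : p.natDegree = (q + 1) * (a + 2) + e := by
    rw [hp, Monic.natDegree_mul (ht.pow _) (monic_X_pow e), natDegree_pow, natDegree_X_pow,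
      hdeg, h2, Nat.mul_comm]
  have hkey : (q + 1) * (a + 2) + d * (q + 1) + 1 = q ^ 2 := by rw [ha]; ring
  have hq2 : 2 ≤ q := by omega
  have heval : ∀ z : K, (t.eval z) ^ (q + 1) * z ^ e = p.eval z := by
    intro z; rw [hp]; simp [eval_mul, eval_pow]
  rw [Finset.sum_congr rfl (fun z _ => heval z)]
  rw [aux_sum_eval_eq hq hq2 p (by omega)]
  by_cases hc : e = d * (q + 1)
  · rw [if_pos hc]
    have hnd : p.natDegree = q ^ 2 - 1 := by omega
    rw [← hnd, Polynomial.Monic.coeff_natDegree hpm]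
  · rw [if_neg hc]
    rw [Polynomial.coeff_eq_zero_of_natDegree_lt (by omega), neg_zero]

private lemma aux_snoc_lt {m : ℕ} (Q' : Fin m → K) (z : K) (j : Fin (m + 1))
    (hj : (j : ℕ) < m) :
    (Fin.snoc Q' z : Fin (m + 1) → K) j = Q' ⟨j, hj⟩ := by
  simp only [Fin.snoc, hj, dif_pos, cast_eq]
  congr 1

private lemma aux_snoc_last {m : ℕ} (Q' : Fin m → K) (z : K) :
    (Fin.snoc Q' z : Fin (m + 1) → K) (Fin.last m) = z := Fin.snoc_last _ _

end AuxHelpers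

/-- With `t ∈ F_{q²}[x]` monic of degree `q - 1 - d` without
roots, `v` as in Lemma `vectorn` and `w = v^{q+1}` componentwise, the vector
`w` has entries in `F_q`, full Hamming weight, and is orthogonal to all the
products `Q^{α + qβ}` with `α, β` of total degree `d`; i.e.
`w ∈ (PRM_d(q²,m) ⋆ PRM_d(q²,m)^q)^⊥`. -/
theorem hermitian_full_weight_dual_vector (K : Type*) [Field K] [Fintype K]
    (q m d : ℕ) (hq : Fintype.card K = q ^ 2) (hm : 1 ≤ m)
    (hd1 : 1 ≤ d) (hd2 : d < q - 2)
    (t : Polynomial K) (ht : t.Monic) (hdeg : t.natDegree = q - 1 - d)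
    (htz : ∀ z : K, t.eval z ≠ 0)
    (v w : (Fin (m + 1) → K) → K)
    (hv1 : ∀ Q : Fin (m + 1) → K,
      ((∀ j : Fin (m + 1), (j : ℕ) < m - 1 → Q j = 0) ∧ Q ⟨m - 1, by omega⟩ = 1) →
        v Q = t.eval (Q ⟨m, by omega⟩))
    (hv2 : ∀ Q : Fin (m + 1) → K,
      ¬((∀ j : Fin (m + 1), (j : ℕ) < m - 1 → Q j = 0) ∧ Q ⟨m - 1, by omega⟩ = 1) →
        v Q = 1)
    (hw : ∀ Q : Fin (m + 1) → K, w Q = (v Q) ^ (q + 1)) :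
    (∀ Q : Fin (m + 1) → K, (w Q) ^ q = w Q) ∧
    (∀ Q : Fin (m + 1) → K, IsStdRep Q → w Q ≠ 0) ∧
    (∀ α β : Fin (m + 1) → ℕ, (∑ i, α i = d) → (∑ i, β i = d) →
      ∑ᶠ Q ∈ {Q : Fin (m + 1) → K | IsStdRep Q},
        w Q * ∏ i, Q i ^ (α i + q * β i) = 0) := by
  classical
  have hq4 : 4 ≤ q := by omega
  refine ⟨?_, ?_, ?_⟩
  · -- entries in F_q
    intro Q
    rw [hw, ← pow_mul, show (q + 1) * q = q ^ 2 + q from by ring, pow_add]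
    have hc : v Q ^ q ^ 2 = v Q := by rw [← hq]; exact FiniteField.pow_card _
    rw [hc]
    exact (pow_succ' _ q).symm
  · -- full weight
    intro Q _
    rw [hw]
    apply pow_ne_zero
    by_cases h : (∀ j : Fin (m + 1), (j : ℕ) < m - 1 → Q j = 0) ∧ Q ⟨m - 1, by omega⟩ = 1
    · rw [hv1 Q h]; exact htz _
    · rw [hv2 Q h]; exact one_ne_zero
  · -- orthogonality
    intro α β hα hβ
    have hαle : ∀ i, α i ≤ d := fun i =>
      hα ▸ Finset.single_le_sum (f := α) (fun _ _ => Nat.zero_le _) (Finset.mem_univ i)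
    have hβle : ∀ i, β i ≤ d := fun i =>
      hβ ▸ Finset.single_le_sum (f := β) (fun _ _ => Nat.zero_le _) (Finset.mem_univ i)
    have hmul : d * (q + 1) = q * d + d := by ring
    have helast_le : α (Fin.last m) + q * β (Fin.last m) ≤ d * (q + 1) := by
      have h1 : q * β (Fin.last m) ≤ q * d := Nat.mul_le_mul_left q (hβle _)
      have := hαle (Fin.last m); omega
    have hlt : d * (q + 1) < q ^ 2 - 1 := by
      obtain ⟨b, hb⟩ : ∃ b, q = d + 3 + b := ⟨q - d - 3, by omega⟩
      subst hb
      have : d * (d + 3 + b + 1) + 1 < (d + 3 + b) ^ 2 := by nlinarith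
      omega
    have hbij : Function.Bijective
        (fun p : (Fin m → K) × K => (Fin.snoc p.1 p.2 : Fin (m + 1) → K)) := by
      apply Function.bijective_iff_has_inverse.mpr
      refine ⟨fun Q => (Fin.init Q, Q (Fin.last m)), ?_, ?_⟩
      · intro p; simp
      · intro Q; exact Fin.snoc_init_self Q
    have step : ∀ F : (Fin (m + 1) → K) → K,
        ∑ Q : Fin (m + 1) → K, F Q
          = ∑ Q' : Fin m → K, ∑ z : K, F (Fin.snoc Q' z) := by
      intro F
      calc ∑ Q : Fin (m + 1) → K, F Q
          = ∑ p : (Fin m → K) × K, F (Fin.snoc p.1 p.2) :=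
            (Fintype.sum_bijective _ hbij _ F (fun p => rfl)).symm
        _ = ∑ Q' : Fin m → K, ∑ z : K, F (Fin.snoc Q' z) := Fintype.sum_prod_type _
    have hprod : ∀ (Q' : Fin m → K) (z : K),
        (∏ i, (Fin.snoc Q' z : Fin (m + 1) → K) i ^ (α i + q * β i))
          = (∏ j : Fin m, Q' j ^ (α j.castSucc + q * β j.castSucc))
              * z ^ (α (Fin.last m) + q * β (Fin.last m)) := by
      intro Q' z
      rw [Fin.prod_univ_castSucc]
      simp
    set jm : Fin m := ⟨m - 1, by omega⟩ with hjm
    set u : Fin m → K := fun j => if j = jm then 1 else 0 with hu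
    set cu : K := ∏ j : Fin m, u j ^ (α j.castSucc + q * β j.castSucc) with hcu
    set c0 : K := ∏ j : Fin m, (0 : K) ^ (α j.castSucc + q * β j.castSucc) with hc0
    set L2v : K := if α (Fin.last m) + q * β (Fin.last m) = d * (q + 1) then -1 else 0 with hL2v
    set g : (Fin m → K) → K :=
      fun Q' => if Q' = u then cu * L2v else if Q' = 0 then c0 else 0 with hg
    have hset : {Q : Fin (m + 1) → K | IsStdRep Q}
        = ↑(Finset.univ.filter fun Q : Fin (m + 1) → K => IsStdRep Q) := by
      ext Q; simp
    rw [hset, finsum_mem_coe_finset, Finset.sum_filter,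
      step (fun Q => if IsStdRep Q then w Q * ∏ i, Q i ^ (α i + q * β i) else 0)]
    have hinner : ∀ Q' : Fin m → K,
        (∑ z : K, if IsStdRep (Fin.snoc Q' z) then
            w (Fin.snoc Q' z)
              * ∏ i, (Fin.snoc Q' z : Fin (m + 1) → K) i ^ (α i + q * β i)
          else 0) = g Q' := by
      intro Q'
      by_cases hE : ∃ j : Fin m, (j : ℕ) < m - 1 ∧ Q' j ≠ 0
      · obtain ⟨j0, hj0m, hj0⟩ := hE
        have hQu : Q' ≠ u := by
          intro h; apply hj0
          have hne : j0 ≠ jm := by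
            intro h'; rw [h'] at hj0m; rw [hjm] at hj0m; simp at hj0m
          rw [h, hu]; simp [hne]
        have hQ0 : Q' ≠ 0 := by intro h; apply hj0; rw [h]; rfl
        have hgoal : g Q' = 0 := by rw [hg]; simp only; rw [if_neg hQu, if_neg hQ0]
        rw [hgoal]
        have hw1 : ∀ z : K, w (Fin.snoc Q' z) = 1 := by
          intro z
          rw [hw, hv2, one_pow]
          rintro ⟨h1, -⟩
          apply hj0
          have h3 := h1 (Fin.castSucc j0) (by simpa using hj0m)
          rwa [Fin.snoc_castSucc] at h3
        have hstd : ∀ z z' : K, IsStdRep (Fin.snoc Q' z) → IsStdRep (Fin.snoc Q' z') := by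
          rintro z z' ⟨i, hi1, hi0⟩
          have him : (i : ℕ) < m := by
            by_contra hcon
            have hlt' : Fin.castSucc j0 < i := by
              rw [Fin.lt_def]; simp only [Fin.coe_castSucc]
              have := i.isLt; omega
            have h4 := hi0 _ hlt'
            rw [Fin.snoc_castSucc] at h4
            exact hj0 h4
          refine ⟨i, ?_, ?_⟩
          · rw [aux_snoc_lt Q' z' i him]
            rw [aux_snoc_lt Q' z i him] at hi1
            exact hi1
          · intro j hj
            have hjm' : (j : ℕ) < m := by rw [Fin.lt_def] at hj; omega
            rw [aux_snoc_lt Q' z' j hjm']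
            have h5 := hi0 j hj
            rwa [aux_snoc_lt Q' z j hjm'] at h5
        by_cases hS : IsStdRep (Fin.snoc Q' (0 : K))
        · have hall : ∀ z : K, IsStdRep (Fin.snoc Q' z) := fun z => hstd 0 z hS
          calc (∑ z : K, if IsStdRep (Fin.snoc Q' z) then
                  w (Fin.snoc Q' z)
                    * ∏ i, (Fin.snoc Q' z : Fin (m + 1) → K) i ^ (α i + q * β i)
                else 0)
              = ∑ z : K, (∏ j : Fin m, Q' j ^ (α j.castSucc + q * β j.castSucc))
                  * z ^ (α (Fin.last m) + q * β (Fin.last m)) := by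
                refine Finset.sum_congr rfl fun z _ => ?_
                rw [if_pos (hall z), hw1 z, one_mul, hprod]
            _ = 0 := by
                rw [← Finset.mul_sum, aux_sum_pow_lo hq (by omega), mul_zero]
        · have hnone : ∀ z : K, ¬ IsStdRep (Fin.snoc Q' z) := fun z h => hS (hstd z 0 h)
          rw [Finset.sum_congr rfl fun z _ => if_neg (hnone z)]
          simp
      · push_neg at hE
        by_cases hujm : Q' jm = 1
        · have hQu : Q' = u := by
            funext j
            by_cases hj : j = jm
            · rw [hj, hujm, hu]; simp
            · have hjlt : (j : ℕ) < m - 1 := by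
                have h1 : (j : ℕ) ≠ m - 1 := by
                  intro h; apply hj; rw [hjm]; ext; simpa using h
                have := j.isLt; omega
              rw [hE j hjlt, hu]; simp [hj]
          rw [hQu]
          have hgoal : g u = cu * L2v := by rw [hg]; simp
          rw [hgoal]
          have huval : ∀ (j : Fin (m + 1)) (hjm2 : (j : ℕ) < m), (j : ℕ) ≠ m - 1 →
              u ⟨(j : ℕ), hjm2⟩ = 0 := by
            intro j hjm2 hne
            have : (⟨(j : ℕ), hjm2⟩ : Fin m) ≠ jm := by
              intro h; apply hne; rw [hjm] at h; simpa using congrArg Fin.val h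
            rw [hu]; simp [this]
          have hstdu : ∀ z : K, IsStdRep (Fin.snoc u z) := by
            intro z
            refine ⟨Fin.castSucc jm, ?_, ?_⟩
            · rw [Fin.snoc_castSucc, hu]; simp
            · intro j hj
              have hjlt : (j : ℕ) < m - 1 := by
                rw [Fin.lt_def] at hj; rw [hjm] at hj; simpa using hj
              have hjm2 : (j : ℕ) < m := by omega
              rw [aux_snoc_lt u z j hjm2, huval j hjm2 (by omega)]
          have hwu : ∀ z : K, w (Fin.snoc u z) = (t.eval z) ^ (q + 1) := by
            intro z
            rw [hw, hv1]
            · have hlast : (⟨m, by omega⟩ : Fin (m + 1)) = Fin.last m := rfl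
              rw [hlast, aux_snoc_last]
            · constructor
              · intro j hj
                have hjm2 : (j : ℕ) < m := by omega
                rw [aux_snoc_lt u z j hjm2, huval j hjm2 (by omega)]
              · have hmm : ((⟨m - 1, by omega⟩ : Fin (m + 1)) : ℕ) < m := by simp; omega
                rw [aux_snoc_lt u z ⟨m - 1, by omega⟩ hmm]
                have : (⟨((⟨m - 1, by omega⟩ : Fin (m + 1)) : ℕ), hmm⟩ : Fin m) = jm := by
                  rw [hjm]
                rw [this, hu]; simp
          calc (∑ z : K, if IsStdRep (Fin.snoc u z) then
                  w (Fin.snoc u z)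
                    * ∏ i, (Fin.snoc u z : Fin (m + 1) → K) i ^ (α i + q * β i)
                else 0)
              = ∑ z : K, (t.eval z ^ (q + 1)
                  * z ^ (α (Fin.last m) + q * β (Fin.last m))) * cu := by
                refine Finset.sum_congr rfl fun z _ => ?_
                rw [if_pos (hstdu z), hwu z, hprod u z, hcu]; ring
            _ = cu * L2v := by
                rw [← Finset.sum_mul, aux_sum_t_pow hq (by omega) ht hdeg helast_le,
                  ← hL2v, mul_comm]
        · by_cases h0 : Q' jm = 0
          · have hQ0 : Q' = 0 := by
              funext j
              by_cases hj : j = jm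
              · rw [hj, h0]; rfl
              · have hjlt : (j : ℕ) < m - 1 := by
                  have h1 : (j : ℕ) ≠ m - 1 := by
                    intro h; apply hj; rw [hjm]; ext; simpa using h
                  have := j.isLt; omega
                rw [hE j hjlt]; rfl
            rw [hQ0]
            have hu0 : (0 : Fin m → K) ≠ u := by
              intro h
              have h1 := congrFun h jm
              rw [hu] at h1; simp at h1
            have hgoal : g 0 = c0 := by simp [hg, hu0]
            rw [hgoal]
            have hstd0 : ∀ z : K, IsStdRep (Fin.snoc (0 : Fin m → K) z) ↔ z = 1 := by
              intro z
              constructor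
              · rintro ⟨i, hi1, -⟩
                by_cases him : (i : ℕ) < m
                · rw [aux_snoc_lt _ z i him] at hi1
                  exact absurd hi1.symm one_ne_zero
                · have hil : i = Fin.last m := by
                    ext; have := i.isLt; simp only [Fin.val_last]; omega
                  rw [hil, aux_snoc_last] at hi1; exact hi1
              · rintro rfl
                refine ⟨Fin.last m, aux_snoc_last _ _, fun j hj => ?_⟩
                have hjm2 : (j : ℕ) < m := by rw [Fin.lt_def] at hj; simpa using hj
                rw [aux_snoc_lt _ _ j hjm2]; rfl
            rw [Finset.sum_eq_single (1 : K)]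
            · rw [if_pos ((hstd0 1).mpr rfl)]
              have hw0 : w (Fin.snoc (0 : Fin m → K) (1 : K)) = 1 := by
                rw [hw, hv2, one_pow]
                rintro ⟨-, h2⟩
                have hmm : ((⟨m - 1, by omega⟩ : Fin (m + 1)) : ℕ) < m := by simp; omega
                rw [aux_snoc_lt _ _ ⟨m - 1, by omega⟩ hmm] at h2
                exact one_ne_zero h2.symm
              rw [hw0, one_mul, hprod, one_pow, mul_one, hc0]
              exact Finset.prod_congr rfl fun j _ => by rw [Pi.zero_apply]
            · intro z _ hz
              exact if_neg (fun h => hz ((hstd0 z).mp h))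
            · intro h; exact absurd (Finset.mem_univ 1) h
          · have hQu : Q' ≠ u := by
              intro h; apply hujm; rw [h, hu]; simp
            have hQ0 : Q' ≠ 0 := by
              intro h; apply h0; rw [h]; rfl
            have hgoal : g Q' = 0 := by rw [hg]; simp only; rw [if_neg hQu, if_neg hQ0]
            rw [hgoal]
            have hnone : ∀ z : K, ¬ IsStdRep (Fin.snoc Q' z) := by
              rintro z ⟨i, hi1, hi0⟩
              by_cases him : (i : ℕ) < m
              · rcases lt_trichotomy ((i : ℕ)) (m - 1) with h | h | h
                · rw [aux_snoc_lt _ _ i him, hE ⟨(i : ℕ), him⟩ h] at hi1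
                  exact one_ne_zero hi1.symm
                · apply hujm
                  rw [aux_snoc_lt _ _ i him] at hi1
                  have : (⟨(i : ℕ), him⟩ : Fin m) = jm := by rw [hjm]; ext; simpa using h
                  rwa [this] at hi1
                · apply h0
                  have hlt2 : Fin.castSucc jm < i := by
                    rw [Fin.lt_def]; rw [hjm]; simpa using h
                  have h6 := hi0 _ hlt2
                  rwa [Fin.snoc_castSucc] at h6
              · apply h0
                have hlt2 : Fin.castSucc jm < i := by
                  rw [Fin.lt_def]; rw [hjm]; simp; have := i.isLt; omega
                have h6 := hi0 _ hlt2
                rwa [Fin.snoc_castSucc] at h6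
            rw [Finset.sum_congr rfl fun z _ => if_neg (hnone z)]
            simp
    rw [Finset.sum_congr rfl fun Q' _ => hinner Q']
    have hu0' : u ≠ (0 : Fin m → K) := by
      intro h
      have h1 := congrFun h jm
      rw [hu] at h1; simp at h1
    have hout : ∀ x ∈ (Finset.univ : Finset (Fin m → K)),
        x ∉ ({u, 0} : Finset (Fin m → K)) → g x = 0 := by
      intro x _ hx
      simp only [Finset.mem_insert, Finset.mem_singleton, not_or] at hx
      rw [hg]; simp only; rw [if_neg hx.1, if_neg hx.2]
    rw [← Finset.sum_subset (Finset.subset_univ ({u, 0} : Finset (Fin m → K))) hout,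
      Finset.sum_pair hu0']
    have h1 : g u = cu * L2v := by rw [hg]; simp
    have h2 : g 0 = c0 := by
      simp [hg, Ne.symm hu0']
    rw [h1, h2]
    by_cases hc : α (Fin.last m) = d ∧ β (Fin.last m) = d
    · have hz : ∀ j : Fin m, α j.castSucc = 0 ∧ β j.castSucc = 0 := by
        intro j
        have hne : Fin.castSucc j ≠ Fin.last m := Fin.ne_of_lt (Fin.castSucc_lt_last j)
        have hmem : Fin.castSucc j ∈ Finset.univ.erase (Fin.last m) :=
          Finset.mem_erase.mpr ⟨hne, Finset.mem_univ _⟩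
        constructor
        · have h3 := Finset.add_sum_erase Finset.univ α (Finset.mem_univ (Fin.last m))
          have h4 : ∑ i ∈ Finset.univ.erase (Fin.last m), α i = 0 := by omega
          exact Finset.sum_eq_zero_iff.mp h4 _ hmem
        · have h3 := Finset.add_sum_erase Finset.univ β (Finset.mem_univ (Fin.last m))
          have h4 : ∑ i ∈ Finset.univ.erase (Fin.last m), β i = 0 := by omega
          exact Finset.sum_eq_zero_iff.mp h4 _ hmem
      have hcu1 : cu = 1 := by
        rw [hcu]; apply Finset.prod_eq_one; intro j _
        rw [(hz j).1, (hz j).2]; simp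
      have hc01 : c0 = 1 := by
        rw [hc0]; apply Finset.prod_eq_one; intro j _
        rw [(hz j).1, (hz j).2]; simp
      have hL : L2v = -1 := by
        rw [hL2v, if_pos]
        rw [hc.1, hc.2]; omega
      rw [hcu1, hc01, hL]; ring
    · have hex : ∃ j : Fin m, α j.castSucc + q * β j.castSucc ≠ 0 := by
        rcases not_and_or.mp hc with h | h
        · have h3 := Finset.add_sum_erase Finset.univ α (Finset.mem_univ (Fin.last m))
          have h4 : ∑ i ∈ Finset.univ.erase (Fin.last m), α i ≠ 0 := by
            have := hαle (Fin.last m); omega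
          obtain ⟨i, hi, hi0⟩ := Finset.exists_ne_zero_of_sum_ne_zero h4
          have hne := (Finset.mem_erase.mp hi).1
          have him : (i : ℕ) < m := by
            have h5 := i.isLt
            rcases Nat.lt_or_ge (i : ℕ) m with h6 | h6
            · exact h6
            · exfalso; apply hne; ext; simp only [Fin.val_last]; omega
          refine ⟨⟨(i : ℕ), him⟩, ?_⟩
          have hcs : Fin.castSucc (⟨(i : ℕ), him⟩ : Fin m) = i := by ext; simp
          rw [hcs]; omega
        · have h3 := Finset.add_sum_erase Finset.univ β (Finset.mem_univ (Fin.last m))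
          have h4 : ∑ i ∈ Finset.univ.erase (Fin.last m), β i ≠ 0 := by
            have := hβle (Fin.last m); omega
          obtain ⟨i, hi, hi0⟩ := Finset.exists_ne_zero_of_sum_ne_zero h4
          have hne := (Finset.mem_erase.mp hi).1
          have him : (i : ℕ) < m := by
            have h5 := i.isLt
            rcases Nat.lt_or_ge (i : ℕ) m with h6 | h6
            · exact h6
            · exfalso; apply hne; ext; simp only [Fin.val_last]; omega
          refine ⟨⟨(i : ℕ), him⟩, ?_⟩
          have hcs : Fin.castSucc (⟨(i : ℕ), him⟩ : Fin m) = i := by ext; simp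
          have h7 : q * β i ≠ 0 := Nat.mul_ne_zero (by omega) hi0
          rw [hcs]; omega
      obtain ⟨j, hj⟩ := hex
      have hc00 : c0 = 0 := by
        rw [hc0]
        exact Finset.prod_eq_zero (Finset.mem_univ j) (zero_pow hj)
      have hL0 : L2v = 0 := by
        rw [hL2v, if_neg]
        intro heq
        apply hc
        have hb1 : q * β (Fin.last m) ≤ q * d := Nat.mul_le_mul_left q (hβle _)
        have ha1 := hαle (Fin.last m)
        rcases Nat.lt_or_ge (β (Fin.last m)) d with hblt | hbge
        · exfalso
          have hb2 : q * (β (Fin.last m) + 1) ≤ q * d := Nat.mul_le_mul_left q (by omega)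
          have hb3 : q * (β (Fin.last m) + 1) = q * β (Fin.last m) + q := by ring
          omega
        · have hbd : β (Fin.last m) = d := le_antisymm (hβle _) hbge
          rw [hbd] at heq
          exact ⟨by omega, hbd⟩
      rw [hc00, hL0, mul_zero, add_zero]
end

section
/- Let 1 ≤ d ≤ d' ≤ m(q−1) with d ≡ d' (mod q−1). Then PRM_d(q,m) ⊆ PRM_{d'}(q,m); i.e., the evaluation of any homogeneous polynomial of degree d at the standard representatives of P^m equals the evaluation of some homogeneous polynomial of degree d'. -/
open MvPolynomial in
lemma PRM_key (F : Type*) [Field F] [Fintype F] (m d d' : ℕ)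
    (hd : 1 ≤ d) (hdd' : d ≤ d')
    (hmod : (Fintype.card F - 1) ∣ (d' - d)) :
    ∀ f : MvPolynomial (Fin (m + 1)) F, f.IsHomogeneous d →
      ∃ g : MvPolynomial (Fin (m + 1)) F, g.IsHomogeneous d' ∧
        ∀ Q : Fin (m + 1) → F, MvPolynomial.eval Q f = MvPolynomial.eval Q g := by
  intro f hf
  obtain ⟨k, hk⟩ := hmod
  -- pick, for each exponent vector α in the support, an index with α i ≠ 0
  have hpick : ∀ α ∈ f.support, ∃ i, α i ≠ 0 := by
    intro α hα
    by_contra h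
    push_neg at h
    have hα0 : α = 0 := Finsupp.ext fun i => h i
    have := hf (mem_support_iff.mp hα)
    rw [hα0] at this
    simp [Finsupp.weight, Finsupp.linearCombination] at this
    omega
  classical
  set e := d' - d with he
  refine ⟨∑ α ∈ f.support, monomial α (f.coeff α) *
      (if h : ∃ i, α i ≠ 0 then X h.choose ^ e else 1), ?_, ?_⟩
  · apply IsHomogeneous.sum
    intro α hα
    rw [dif_pos (hpick α hα)]
    have h1 : (monomial α (f.coeff α)).IsHomogeneous d := by
      apply isHomogeneous_monomial
      rw [Finsupp.degree_eq_weight_one]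
      exact hf (mem_support_iff.mp hα)
    have h2 : ((X (hpick α hα).choose ^ e : MvPolynomial (Fin (m+1)) F)).IsHomogeneous e :=
      by simpa using (isHomogeneous_X F (hpick α hα).choose).pow e
    have := h1.mul h2
    rwa [show d + e = d' by omega] at this
  · intro Q
    conv_lhs => rw [f.as_sum]
    rw [map_sum, map_sum]
    apply Finset.sum_congr rfl
    intro α hα
    rw [dif_pos (hpick α hα)]
    set i := (hpick α hα).choose with hi
    have hαi : α i ≠ 0 := (hpick α hα).choose_spec
    rw [map_mul, map_pow, eval_X]
    by_cases hQ : Q i = 0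
    · have : eval Q (monomial α (f.coeff α)) = 0 := by
        rw [eval_monomial]
        apply mul_eq_zero_of_right
        apply Finset.prod_eq_zero (Finsupp.mem_support_iff.mpr hαi)
        show Q i ^ α i = 0
        rw [hQ, zero_pow hαi]
      rw [this, zero_mul]
    · rw [hk, pow_mul, FiniteField.pow_card_sub_one_eq_one (Q i) hQ, one_pow, mul_one]

/-- For `1 ≤ d ≤ d' ≤ m(q-1)` with `d ≡ d' (mod q - 1)`, one
has `PRM_d(q,m) ⊆ PRM_{d'}(q,m)`: the evaluation of any homogeneous
polynomial of degree `d` at the standard representatives of `P^m` equals the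
evaluation of some homogeneous polynomial of degree `d'`. -/
theorem PRM_nested (F : Type*) [Field F] [Fintype F] (m d d' : ℕ)
    (hm : 1 ≤ m) (hd : 1 ≤ d) (hdd' : d ≤ d')
    (hd'm : d' ≤ m * (Fintype.card F - 1))
    (hmod : (Fintype.card F - 1) ∣ (d' - d)) :
    PRM F m d ≤ PRM F m d' ∧
    ∀ f : MvPolynomial (Fin (m + 1)) F, f.IsHomogeneous d →
      ∃ g : MvPolynomial (Fin (m + 1)) F, g.IsHomogeneous d' ∧
        ∀ Q : Fin (m + 1) → F, IsStdRep Q →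
          MvPolynomial.eval Q f = MvPolynomial.eval Q g := by
  have key := PRM_key F m d d' hd hdd' hmod
  constructor
  · rw [PRM, Submodule.span_le]
    rintro c ⟨f, hf, rfl⟩
    obtain ⟨g, hg, hfg⟩ := key f hf
    exact Submodule.subset_span ⟨g, hg, funext fun Q => hfg Q.1⟩
  · intro f hf
    obtain ⟨g, hg, hfg⟩ := key f hf
    exact ⟨g, hg, fun Q _ => hfg Q⟩
end
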